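/- arXiv:1811.10106 — 2 statements merged into one kernel-verified Lean document; each statement's English description precedes it below -/
import Mathlib

section
/- Let Z be a random variable with the chi-squared distribution with k degrees of freedom, k ≥ 1. Then for every t ≥ 1, P((Z − k)/k ≥ 4t) ≤ exp(−k·t). -/
open MeasureTheory ProbabilityTheory

noncomputable section

/-- standard Gaussian measure on ℝ^k -/
def stdGaussianVec (k : ℕ) : Measure (Fin k → ℝ) :=
  Measure.pi fun _ => gaussianReal 0 1

/-- chi-squared distribution with k degrees of freedom: the law of the squared Euclidean norm
of a standard Gaussian vector in ℝ^k -/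
def chiSq (k : ℕ) : Measure ℝ :=
  (stdGaussianVec k).map (fun x => ∑ i, (x i) ^ 2)

/-! Chernoff's bound at `λ = 3/8`: each coordinate gives `E exp(λ X²) = (1 - 2λ)^(-1/2) = 2`, so
`P(Z ≥ k(1 + 4t)) ≤ e^(-3k(1 + 4t)/8) 2^k`, which is at most `e^(-kt)` because
`log 2 < 3/8 + t/2`. -/

open Real

lemma gaussianPDFReal_mul_exp_mul_sq (c x : ℝ) :
    gaussianPDFReal 0 1 x * exp (c * x ^ 2) = (√(2 * π))⁻¹ * exp (-(1 / 2 - c) * x ^ 2) := by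
  rw [gaussianPDFReal, mul_assoc, ← exp_add]
  simp only [NNReal.coe_one, mul_one, sub_zero]
  congr 2
  ring

lemma integrable_exp_mul_sq_gaussianReal {c : ℝ} (hc : c < 1 / 2) :
    Integrable (fun x => exp (c * x ^ 2)) (gaussianReal 0 1) := by
  rw [gaussianReal_of_var_ne_zero 0 one_ne_zero, gaussianPDF_def,
    integrable_withDensity_iff_integrable_smul' (measurable_gaussianPDFReal 0 1).ennreal_ofReal
      (ae_of_all _ fun _ => ENNReal.ofReal_lt_top)]
  simp only [ENNReal.toReal_ofReal (gaussianPDFReal_nonneg 0 1 _), smul_eq_mul,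
    gaussianPDFReal_mul_exp_mul_sq]
  exact (integrable_exp_neg_mul_sq (by linarith)).const_mul _

lemma integral_exp_mul_sq_gaussianReal {c : ℝ} (hc : c < 1 / 2) :
    ∫ x, exp (c * x ^ 2) ∂gaussianReal 0 1 = (√(1 - 2 * c))⁻¹ := by
  simp only [integral_gaussianReal_eq_integral_smul one_ne_zero, smul_eq_mul,
    gaussianPDFReal_mul_exp_mul_sq, integral_const_mul, integral_gaussian]
  rw [← sqrt_inv, ← sqrt_mul (by positivity), ← sqrt_inv]
  congr 1
  have : 0 < 1 - 2 * c := by linarith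
  field_simp

instance isProbabilityMeasure_stdGaussianVec (k : ℕ) :
    IsProbabilityMeasure (stdGaussianVec k) := by
  unfold stdGaussianVec; infer_instance

lemma integrable_exp_mul_sum_sq_stdGaussianVec (k : ℕ) {c : ℝ} (hc : c < 1 / 2) :
    Integrable (fun x => exp (c * ∑ i, x i ^ 2)) (stdGaussianVec k) := by
  simp only [Finset.mul_sum, exp_sum]
  exact Integrable.fintype_prod fun _ => integrable_exp_mul_sq_gaussianReal hc

lemma integral_exp_mul_sum_sq_stdGaussianVec (k : ℕ) {c : ℝ} (hc : c < 1 / 2) :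
    ∫ x, exp (c * ∑ i, x i ^ 2) ∂stdGaussianVec k = (√(1 - 2 * c))⁻¹ ^ k := by
  simp only [Finset.mul_sum, exp_sum, stdGaussianVec]
  rw [integral_fintype_prod_eq_pow (fun y => exp (c * y ^ 2)),
    integral_exp_mul_sq_gaussianReal hc, Fintype.card_fin]

lemma measurable_sum_sq (k : ℕ) : Measurable fun x : Fin k → ℝ => ∑ i, x i ^ 2 := by
  fun_prop

instance isProbabilityMeasure_chiSq (k : ℕ) : IsProbabilityMeasure (chiSq k) :=
  Measure.isProbabilityMeasure_map (measurable_sum_sq k).aemeasurable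

lemma integrable_exp_mul_chiSq (k : ℕ) {c : ℝ} (hc : c < 1 / 2) :
    Integrable (fun z => exp (c * z)) (chiSq k) :=
  (integrable_map_measure (by fun_prop) (measurable_sum_sq k).aemeasurable).2
    (integrable_exp_mul_sum_sq_stdGaussianVec k hc)

lemma mgf_chiSq (k : ℕ) {c : ℝ} (hc : c < 1 / 2) :
    mgf id (chiSq k) c = (√(1 - 2 * c))⁻¹ ^ k := by
  rw [mgf, chiSq, integral_map (measurable_sum_sq k).aemeasurable (by fun_prop)]
  exact integral_exp_mul_sum_sq_stdGaussianVec k hc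

lemma chiSq_Ici_le (k : ℕ) (a : ℝ) {c : ℝ} (hc₀ : 0 ≤ c) (hc : c < 1 / 2) :
    chiSq k (Set.Ici a) ≤ ENNReal.ofReal (exp (-c * a) * (√(1 - 2 * c))⁻¹ ^ k) := by
  rw [← ofReal_measureReal, ← mgf_chiSq k hc]
  exact ENNReal.ofReal_le_ofReal (measure_ge_le_exp_mul_mgf a hc₀ (integrable_exp_mul_chiSq k hc))

theorem chiSq_upper_tail_general (k : ℕ) (t : ℝ) (ht : 1 ≤ t) :
    chiSq k {z : ℝ | (z - k) / k ≥ 4 * t} ≤ ENNReal.ofReal (Real.exp (-(k * t))) := by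
  have hsub : {z : ℝ | (z - k) / k ≥ 4 * t} ⊆ Set.Ici (k + 4 * k * t) := by
    intro z hz
    rcases k.eq_zero_or_pos with rfl | hk
    -- for `k = 0` the quotient is the junk value `z / 0 = 0`, so the set is empty
    · have h : 4 * t ≤ 0 := by simpa using hz
      linarith
    · have hk : (0 : ℝ) < k := by exact_mod_cast hk
      have hz : 4 * t * k ≤ z - k := (le_div_iff₀ hk).1 hz
      exact Set.mem_Ici.2 (by linarith)
  have hsqrt : (√(1 - 2 * (3 / 8) : ℝ))⁻¹ = 2 := by
    rw [show (1 - 2 * (3 / 8) : ℝ) = (2⁻¹) ^ 2 by norm_num, sqrt_sq (by norm_num), inv_inv]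
  have hbound : exp (-(3 / 8) * (k + 4 * k * t)) * 2 ^ k ≤ exp (-(k * t)) := by
    rw [← exp_log (two_pos (α := ℝ)), ← exp_nat_mul, ← exp_add, exp_le_exp]
    nlinarith [log_two_lt_d9, (Nat.cast_nonneg k : (0 : ℝ) ≤ k)]
  calc chiSq k {z : ℝ | (z - k) / k ≥ 4 * t}
      ≤ chiSq k (Set.Ici (k + 4 * k * t)) := measure_mono hsub
    _ ≤ ENNReal.ofReal (exp (-(3 / 8) * (k + 4 * k * t)) * 2 ^ k) := by
      simpa only [hsqrt] using
        chiSq_Ici_le k (k + 4 * k * t) (c := 3 / 8) (by norm_num) (by norm_num)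
    _ ≤ ENNReal.ofReal (exp (-(k * t))) := ENNReal.ofReal_le_ofReal hbound

/-- **Corollary.** For Z ~ χ²_k with k ≥ 1 and every t ≥ 1: P((Z − k)/k ≥ 4t) ≤ exp(−kt). -/
theorem chiSq_upper_tail (k : ℕ) (hk : 1 ≤ k) (t : ℝ) (ht : 1 ≤ t) :
    chiSq k {z : ℝ | (z - k) / k ≥ 4 * t} ≤ ENNReal.ofReal (Real.exp (-(k * t))) :=
  chiSq_upper_tail_general k t ht
end
end

section
/- Let u ∈ ℝ^d (d ≥ 2) be a unit vector, θ ≥ 0, Σ = I_d + θuuᵀ, and let u₋₁ ∈ ℝ^{d−1} denote u with its first coordinate removed. Then (Σ_{2:d})⁻¹·Σ_{2:d,1} = (θ·u₁/(1 + (1−u₁²)·θ))·u₋₁. -/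
/-!
The vector `v = u₋₁` is an eigenvector of the rank-one perturbation `Σ_{2:d} = 1 + θ v vᵀ`, with
eigenvalue `1 + θ ‖v‖² = 1 + (1 - u₁²) θ`, and `Σ_{2:d,1} = θ u₁ v`. Hence `(Σ_{2:d})⁻¹` acts on
`Σ_{2:d,1}` by division by that eigenvalue. The matrix determinant lemma shows that the eigenvalue
vanishes exactly when `Σ_{2:d}` is singular, in which case both sides are `0`.
-/

open Matrix

noncomputable section

/-- the first index of Fin d (coordinate "1") -/
def fin0 {d : ℕ} (hd : 2 ≤ d) : Fin d := ⟨0, by omega⟩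

/-- the (j+1)-st index of Fin d (coordinates "2,…,d") -/
def finTail {d : ℕ} (hd : 2 ≤ d) (j : Fin (d - 1)) : Fin d :=
  ⟨j.1 + 1, by have := j.isLt; omega⟩

/-- the lower-right (d−1)×(d−1) block Σ_{2:d}, obtained by deleting the first row and column -/
def subLR {d : ℕ} (hd : 2 ≤ d) (S : Matrix (Fin d) (Fin d) ℝ) :
    Matrix (Fin (d - 1)) (Fin (d - 1)) ℝ :=
  Matrix.of fun j j' => S (finTail hd j) (finTail hd j')

/-- the first row of Σ with its first entry removed, Σ_{1,2:d} -/
def subRow1 {d : ℕ} (hd : 2 ≤ d) (S : Matrix (Fin d) (Fin d) ℝ) : Fin (d - 1) → ℝ :=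
  fun j => S (fin0 hd) (finTail hd j)

/-- the first column of Σ with its first entry removed, Σ_{2:d,1} -/
def subCol1 {d : ℕ} (hd : 2 ≤ d) (S : Matrix (Fin d) (Fin d) ℝ) : Fin (d - 1) → ℝ :=
  fun j => S (finTail hd j) (fin0 hd)

namespace Matrix

section CommRing

variable {ι R : Type*} [Fintype ι] [DecidableEq ι] [CommRing R]

theorem det_one_add_vecMulVec (v w : ι → R) : (1 + vecMulVec v w).det = 1 + w ⬝ᵥ v := by
  rw [vecMulVec_eq Unit, det_one_add_replicateCol_mul_replicateRow]

theorem one_add_vecMulVec_mulVec_self (v w : ι → R) :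
    (1 + vecMulVec v w) *ᵥ v = (1 + w ⬝ᵥ v) • v := by
  rw [add_mulVec, one_mulVec, vecMulVec_mulVec, op_smul_eq_smul, add_smul, one_smul]

end CommRing

theorem inv_one_add_vecMulVec_mulVec_self {ι K : Type*} [Fintype ι] [DecidableEq ι] [Field K]
    (v w : ι → K) : (1 + vecMulVec v w)⁻¹ *ᵥ v = (1 + w ⬝ᵥ v)⁻¹ • v := by
  by_cases h : 1 + w ⬝ᵥ v = 0
  · have hdet : ¬IsUnit (1 + vecMulVec v w).det := by simp [det_one_add_vecMulVec, h]
    simp [nonsing_inv_apply_not_isUnit _ hdet, h]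
  · have hdet : IsUnit (1 + vecMulVec v w).det := by
      simpa [det_one_add_vecMulVec] using h
    have := invertibleOfIsUnitDet _ hdet
    refine inv_mulVec_eq_vec ?_
    rw [mulVec_smul, one_add_vecMulVec_mulVec_self, smul_smul, inv_mul_cancel₀ h, one_smul]

theorem submatrix_one_add_vecMulVec {ι κ R : Type*} [DecidableEq ι] [DecidableEq κ] [Semiring R]
    (v w : ι → R) {f : κ → ι} (hf : Function.Injective f) :
    (1 + vecMulVec v w).submatrix f f = 1 + vecMulVec (v ∘ f) (w ∘ f) := by
  ext i j
  simp [one_apply, hf.eq_iff, vecMulVec_apply]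

end Matrix

theorem finTail_injective {d : ℕ} (hd : 2 ≤ d) : Function.Injective (finTail hd) := by
  intro j j' h
  ext
  simpa [finTail] using congrArg Fin.val h

theorem finTail_ne_fin0 {d : ℕ} (hd : 2 ≤ d) (j : Fin (d - 1)) : finTail hd j ≠ fin0 hd := by
  simp [finTail, fin0, Fin.ext_iff]

theorem sum_eq_fin0_add_sum_finTail {M : Type*} [AddCommMonoid M] {d : ℕ} (hd : 2 ≤ d)
    (f : Fin d → M) : ∑ i, f i = f (fin0 hd) + ∑ j, f (finTail hd j) := by
  obtain ⟨n, rfl⟩ : ∃ n, d = n + 2 := ⟨d - 2, by omega⟩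
  exact Fin.sum_univ_succ f

theorem spiked_beta_star_general (d : ℕ) (hd : 2 ≤ d) (u : Fin d → ℝ)
    (hu : ∑ i, (u i) ^ 2 = 1) (θ : ℝ) :
    (subLR hd ((1 : Matrix (Fin d) (Fin d) ℝ) + θ • vecMulVec u u))⁻¹.mulVec
        (subCol1 hd ((1 : Matrix (Fin d) (Fin d) ℝ) + θ • vecMulVec u u))
      = fun j => (θ * u (fin0 hd) / (1 + (1 - (u (fin0 hd)) ^ 2) * θ)) * u (finTail hd j) := by
  set v : Fin (d - 1) → ℝ := u ∘ finTail hd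
  have hspiked : (1 : Matrix (Fin d) (Fin d) ℝ) + θ • vecMulVec u u = 1 + vecMulVec u (θ • u) := by
    rw [vecMulVec_smul]
  have hblock : subLR hd (1 + vecMulVec u (θ • u)) = 1 + vecMulVec v (θ • v) :=
    submatrix_one_add_vecMulVec u (θ • u) (finTail_injective hd)
  have hcol : subCol1 hd (1 + vecMulVec u (θ • u)) = (θ * u (fin0 hd)) • v := by
    ext j
    simp only [subCol1, Matrix.add_apply, one_apply_ne (finTail_ne_fin0 hd j), vecMulVec_apply,
      Pi.smul_apply, smul_eq_mul, Function.comp_apply, v]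
    ring
  have hnorm : v ⬝ᵥ v = 1 - u (fin0 hd) ^ 2 := by
    rw [sum_eq_fin0_add_sum_finTail hd] at hu
    simp only [dotProduct, v, Function.comp_apply, ← sq]
    linarith
  rw [hspiked, hblock, hcol, mulVec_smul, inv_one_add_vecMulVec_mulVec_self, smul_dotProduct, hnorm]
  ext j
  simp only [Pi.smul_apply, smul_eq_mul, v, Function.comp_apply]
  ring

/-- For a unit vector u ∈ ℝ^d, θ ≥ 0 and Σ = I_d + θuuᵀ:
(Σ_{2:d})⁻¹·Σ_{2:d,1} = (θu₁/(1 + (1−u₁²)θ))·u₋₁. -/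
theorem spiked_beta_star (d : ℕ) (hd : 2 ≤ d) (u : Fin d → ℝ)
    (hu : ∑ i, (u i) ^ 2 = 1) (θ : ℝ) (hθ : 0 ≤ θ) :
    (subLR hd ((1 : Matrix (Fin d) (Fin d) ℝ) + θ • vecMulVec u u))⁻¹.mulVec
        (subCol1 hd ((1 : Matrix (Fin d) (Fin d) ℝ) + θ • vecMulVec u u))
      = fun j => (θ * u (fin0 hd) / (1 + (1 - (u (fin0 hd)) ^ 2) * θ)) * u (finTail hd j) :=
  spiked_beta_star_general d hd u hu θ
end
end
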